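/- For any two finite graphs G₁ and G₂ and any k ≥ 2, the multisets of stable k-WL colors over all k-tuples of G₁ and G₂ are equal if and only if the multisets of diagonal stable colors {{C_{k-WL}(v,...,v) : v ∈ V}} are equal for G₁ and G₂. -/

import Mathlib

/-- The "ordered isomorphism type" of a `k`-tuple: the equality pattern and the adjacency
pattern of its entries. Two tuples get the same initial color iff the ordered induced
subgraphs on them are isomorphic. -/
def kInit {V : Type} (G : SimpleGraph V) (k : ℕ) (t : Fin k → V) :
    (Fin k → Fin k → Prop) × (Fin k → Fin k → Prop) :=
  (fun i j => t i = t j, fun i j => G.Adj (t i) (t j))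

/-- Color type after `n` rounds of `k`-WL refinement. -/
def KWLType (k : ℕ) : ℕ → Type
  | 0 => (Fin k → Fin k → Prop) × (Fin k → Fin k → Prop)
  | n + 1 => KWLType k n × (Fin k → Multiset (KWLType k n))

/-- `n` rounds of `k`-WL refinement: `C'(s) = (C(s), M₁(s), …, M_k(s))` with
`M_j(s) = {{C(s[j := w]) : w ∈ V}}`, initialized with the ordered isomorphism type. -/
def kwl {V : Type} [Fintype V] (G : SimpleGraph V) (k : ℕ) :
    (n : ℕ) → (Fin k → V) → KWLType k n
  | 0 => kInit G k
  | n + 1 => fun t => (kwl G k n t,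
      fun j => Finset.univ.val.map (fun w => kwl G k n (Function.update t j w)))

/-!
Stability means that the round-`N+1` color of a tuple, and hence each multiset
`{{C(t[j := w]) : w ∈ V}}`, is a function `T j` of its round-`N` color `C(t)`, and the same
`T j` serves both graphs. Resampling the coordinates `0, …, k-1` one after the other turns any
multiset `S` of tuples into `|S|` copies of all tuples, so applying `T 0, …, T (k-1)` to the
diagonal colors yields `|V|` copies of the full multiset of colors; the factor `|V|` is read off
the diagonal multiset and cancels. Conversely, every color remembers the equality pattern of its
tuple, which singles out the diagonal colors inside the full multiset.
-/

open Function

section Resample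

variable {V : Type*} [Fintype V] {k : ℕ}

def resample (j : Fin k) (S : Multiset (Fin k → V)) : Multiset (Fin k → V) :=
  S.bind fun t => Finset.univ.val.map (update t j)

theorem resample_bind {α : Type*} (j : Fin k) (S : Multiset α) (g : α → Multiset (Fin k → V)) :
    resample j (S.bind g) = S.bind fun a => resample j (g a) :=
  Multiset.bind_assoc

theorem foldr_resample_eq_bind (l : List (Fin k)) (S : Multiset (Fin k → V)) :
    l.foldr resample S = S.bind fun t => l.foldr resample {t} := by
  induction l with
  | nil => exact (Multiset.bind_singleton S id).trans (Multiset.map_id S) |>.symm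
  | cons j l ih => simp only [List.foldr_cons, ih, resample_bind]

theorem nodup_resample {j : Fin k} {S : Multiset (Fin k → V)} (hS : S.Nodup)
    (hj : ∀ u ∈ S, ∀ u' ∈ S, u j = u' j) : (resample j S).Nodup := by
  refine Multiset.nodup_bind.2 ⟨fun u _ => Finset.univ.nodup.map (update_injective u j), ?_⟩
  refine hS.pairwise fun u hu u' hu' hne => Multiset.disjoint_left.2 fun {t} ht ht' => hne ?_
  obtain ⟨w, -, rfl⟩ := Multiset.mem_map.1 ht
  obtain ⟨w', -, hw'⟩ := Multiset.mem_map.1 ht'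
  have hw : w' = w := by simpa using congrFun hw' j
  subst hw
  funext i
  by_cases hi : i = j
  · subst hi; exact hj u hu u' hu'
  · simpa [hi] using (congrFun hw' i).symm

theorem mem_resample {j : Fin k} {S : Multiset (Fin k → V)} {t : Fin k → V} :
    t ∈ resample j S ↔ ∃ u ∈ S, ∃ w, update u j w = t := by
  simp [resample]

theorem foldr_resample_singleton [DecidableEq V] {l : List (Fin k)} (hl : l.Nodup)
    (t : Fin k → V) :
    l.foldr resample {t} = (Finset.univ.filter fun u : Fin k → V => ∀ i ∉ l, u i = t i).val := by
  induction l with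
  | nil =>
    simp only [List.foldr_nil, List.not_mem_nil, not_false_eq_true, forall_const, ← funext_iff,
      Finset.filter_eq', Finset.mem_univ, if_true, Finset.singleton_val]
  | cons j l ih =>
    rw [List.nodup_cons] at hl
    rw [List.foldr_cons, ih hl.2]
    refine (Multiset.Nodup.ext (nodup_resample (Finset.nodup _) ?_) (Finset.nodup _)).2 ?_
    · intro u hu u' hu'
      simp only [Finset.mem_val, Finset.mem_filter] at hu hu'
      rw [hu.2 j hl.1, hu'.2 j hl.1]
    · intro u
      simp only [mem_resample, Finset.mem_val, Finset.mem_filter, Finset.mem_univ, true_and,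
        List.mem_cons, not_or]
      constructor
      · rintro ⟨u, hu, w, rfl⟩ i ⟨hij, hil⟩
        rw [update_of_ne hij, hu i hil]
      · intro hu
        refine ⟨update u j (t j), fun i hil => ?_, u j, by simp⟩
        by_cases hij : i = j
        · subst hij; simp
        · rw [update_of_ne hij, hu i ⟨hij, hil⟩]

theorem foldr_resample_finRange (S : Multiset (Fin k → V)) :
    (List.finRange k).foldr resample S = Multiset.card S • Finset.univ.val := by
  classical
  have hsingleton (t : Fin k → V) : (List.finRange k).foldr resample {t} = Finset.univ.val := by
    simp [foldr_resample_singleton (List.nodup_finRange k)]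
  simp only [foldr_resample_eq_bind, hsingleton, Multiset.bind, Multiset.map_const', Multiset.join,
    Multiset.sum_replicate]

end Resample

section Colors

variable {V C : Type*} [Fintype V] {k : ℕ} {T : Fin k → C → Multiset C} {f : (Fin k → V) → C}

theorem map_resample
    (hT : ∀ t j, T j (f t) = Finset.univ.val.map fun w => f (update t j w))
    (j : Fin k) (S : Multiset (Fin k → V)) :
    (resample j S).map f = (S.map f).bind (T j) := by
  simp only [resample, Multiset.map_bind, Multiset.bind_map, hT, Multiset.map_map, comp_def]

theorem map_foldr_resample
    (hT : ∀ t j, T j (f t) = Finset.univ.val.map fun w => f (update t j w))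
    (l : List (Fin k)) (S : Multiset (Fin k → V)) :
    (l.foldr resample S).map f = l.foldr (fun j m => m.bind (T j)) (S.map f) := by
  induction l with
  | nil => rfl
  | cons j l ih => rw [List.foldr_cons, map_resample hT, ih, List.foldr_cons]

theorem card_nsmul_map_univ_eq_foldr_bind
    (hT : ∀ t j, T j (f t) = Finset.univ.val.map fun w => f (update t j w)) :
    Fintype.card V • Finset.univ.val.map f =
      (List.finRange k).foldr (fun j m => m.bind (T j))
        (Finset.univ.val.map fun v => f fun _ => v) := by
  have hdiag : (Finset.univ.val.map fun v : V => f fun _ => v) =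
      (Finset.univ.val.map fun v : V => fun _ : Fin k => v).map f := by
    rw [Multiset.map_map]; rfl
  rw [hdiag, ← map_foldr_resample hT, foldr_resample_finRange, Multiset.map_nsmul,
    Multiset.card_map, Finset.card_val, Finset.card_univ]

end Colors

theorem map_univ_eq_of_card_nsmul_eq {V₁ V₂ C : Type*} [Fintype V₁] [Fintype V₂] {k : ℕ}
    (hk : 0 < k) {f₁ : (Fin k → V₁) → C} {f₂ : (Fin k → V₂) → C}
    (hcard : Fintype.card V₁ = Fintype.card V₂)
    (h : Fintype.card V₁ • Finset.univ.val.map f₁ = Fintype.card V₂ • Finset.univ.val.map f₂) :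
    Finset.univ.val.map f₁ = Finset.univ.val.map f₂ := by
  rcases Nat.eq_zero_or_pos (Fintype.card V₁) with h0 | hpos
  · have : IsEmpty V₁ := Fintype.card_eq_zero_iff.mp h0
    have : IsEmpty V₂ := Fintype.card_eq_zero_iff.mp (hcard ▸ h0)
    have : Nonempty (Fin k) := ⟨⟨0, hk⟩⟩
    simp [Finset.univ_eq_empty]
  · rw [← hcard] at h
    exact nsmul_right_injective hpos.ne' h

def KWLType.toInit {k : ℕ} : {n : ℕ} → KWLType k n → KWLType k 0
  | 0, c => c
  | _ + 1, c => toInit c.1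

theorem kwl_toInit {V : Type} [Fintype V] (G : SimpleGraph V) (k : ℕ) :
    ∀ (n : ℕ) (t : Fin k → V), (kwl G k n t).toInit = kInit G k t
  | 0, _ => rfl
  | n + 1, t => kwl_toInit G k n t

theorem Finset.filter_univ_forall_eq {ι V : Type*} [Fintype ι] [Fintype V] [Nonempty ι]
    [DecidableEq ι] [DecidablePred fun t : ι → V => ∀ i j, t i = t j] :
    (Finset.univ.filter fun t : ι → V => ∀ i j, t i = t j) =
      Finset.univ.map ⟨const ι, const_injective⟩ := by
  ext t
  simp only [Finset.mem_filter, Finset.mem_univ, true_and, Finset.mem_map, Embedding.coeFn_mk]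
  refine ⟨fun h => ?_, by rintro ⟨v, rfl⟩ _ _; rfl⟩
  obtain ⟨i⟩ := ‹Nonempty ι›
  exact ⟨t i, funext (h i)⟩

open scoped Classical in
theorem filter_map_kwl_univ {V : Type} [Fintype V] (G : SimpleGraph V) {k : ℕ} (hk : 0 < k)
    (n : ℕ) :
    (Finset.univ.val.map (kwl G k n)).filter (fun c => ∀ i j, c.toInit.1 i j) =
      Finset.univ.val.map fun v => kwl G k n fun _ => v := by
  have : Nonempty (Fin k) := ⟨⟨0, hk⟩⟩
  rw [Multiset.filter_map, Multiset.filter_congr (q := fun t : Fin k → V => ∀ i j, t i = t j)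
    fun t _ => by simp [kwl_toInit, kInit], ← Finset.filter_val, Finset.filter_univ_forall_eq,
    Finset.map_val, Multiset.map_map]
  rfl

theorem exists_kwl_succ_factor {V₁ V₂ : Type} [Fintype V₁] [Fintype V₂]
    (G₁ : SimpleGraph V₁) (G₂ : SimpleGraph V₂) (k N : ℕ)
    (hstab : (Sum.elim (kwl G₁ k (N + 1)) (kwl G₂ k (N + 1))).FactorsThrough
      (Sum.elim (kwl G₁ k N) (kwl G₂ k N))) :
    ∃ T : Fin k → KWLType k N → Multiset (KWLType k N),
      (∀ t j, T j (kwl G₁ k N t) = Finset.univ.val.map fun w => kwl G₁ k N (update t j w)) ∧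
      (∀ t j, T j (kwl G₂ k N t) = Finset.univ.val.map fun w => kwl G₂ k N (update t j w)) := by
  have hfac (j : Fin k) :
      (fun u => (Sum.elim (kwl G₁ k (N + 1)) (kwl G₂ k (N + 1)) u).2 j).FactorsThrough
        (Sum.elim (kwl G₁ k N) (kwl G₂ k N)) :=
    fun _ _ h => congrArg (fun c : KWLType k (N + 1) => c.2 j) (hstab h)
  exact ⟨fun j => extend (Sum.elim (kwl G₁ k N) (kwl G₂ k N)) _ 0,
    fun t j => (hfac j).extend_apply 0 (.inl t), fun t j => (hfac j).extend_apply 0 (.inr t)⟩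

/-- For finite graphs `G₁, G₂` and `k ≥ 2`, once the `k`-WL coloring
has stabilized (iteration `N` induces the same partition of tuples as iteration `N+1`),
the multisets of stable colors over *all* `k`-tuples agree iff the multisets of stable
colors of the *diagonal* tuples `{{C(v,…,v) : v ∈ V}}` agree. -/
theorem kwl_full_multiset_eq_iff_diag_multiset_eq
    {V₁ V₂ : Type} [Fintype V₁] [Fintype V₂]
    (G₁ : SimpleGraph V₁) (G₂ : SimpleGraph V₂) (k : ℕ) (hk : 2 ≤ k) (N : ℕ)
    (hstab : ∀ u w : (Fin k → V₁) ⊕ (Fin k → V₂),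
      Sum.elim (kwl G₁ k N) (kwl G₂ k N) u = Sum.elim (kwl G₁ k N) (kwl G₂ k N) w ↔
      Sum.elim (kwl G₁ k (N + 1)) (kwl G₂ k (N + 1)) u =
        Sum.elim (kwl G₁ k (N + 1)) (kwl G₂ k (N + 1)) w) :
    (Finset.univ.val.map (kwl G₁ k N) = Finset.univ.val.map (kwl G₂ k N)) ↔
    (Finset.univ.val.map (fun v : V₁ => kwl G₁ k N (fun _ => v)) =
      Finset.univ.val.map (fun v : V₂ => kwl G₂ k N (fun _ => v))) := by
  have hk0 : 0 < k := by omega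
  refine ⟨fun hfull => ?_, fun hdiag => ?_⟩
  · rw [← filter_map_kwl_univ G₁ hk0, ← filter_map_kwl_univ G₂ hk0, hfull]
  · obtain ⟨T, hT₁, hT₂⟩ := exists_kwl_succ_factor G₁ G₂ k N fun u w => (hstab u w).mp
    have hcard : Fintype.card V₁ = Fintype.card V₂ := by
      simpa using congrArg Multiset.card hdiag
    refine map_univ_eq_of_card_nsmul_eq hk0 hcard ?_
    rw [card_nsmul_map_univ_eq_foldr_bind hT₁, card_nsmul_map_univ_eq_foldr_bind hT₂, hdiag]
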